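/- arXiv:2003.12899 — 4 statements merged into one kernel-verified Lean document; each statement's English description precedes it below -/
import Mathlib

section
/- Let Ω₁ and Ω₂ be nonempty convex subsets of a real vector space X. If the system {Ω₁, Ω₂} is extremal in X and the set difference Ω₁ − Ω₂ := {x − y : x ∈ Ω₁, y ∈ Ω₂} is core-solid, then Ω₁ and Ω₂ are separated by a hyperplane, i.e., there exists a nonzero linear function f : X → ℝ with sup{f(x) : x ∈ Ω₁} ≤ inf{f(x) : x ∈ Ω₂}. -/
open Pointwise Set

/-- Algebraic core (algebraic interior) of a set in a real vector space. -/
def algCore {X : Type*} [AddCommGroup X] [Module ℝ X] (Ω : Set X) : Set X :=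
  {x | x ∈ Ω ∧ ∀ v : X, ∃ δ : ℝ, 0 < δ ∧ ∀ t : ℝ, |t| < δ → x + t • v ∈ Ω}

/-- Normal cone to a convex set `Ω` at `xbar`, consisting of linear functionals. -/
def normalCone {X : Type*} [AddCommGroup X] [Module ℝ X] (xbar : X) (Ω : Set X) :
    Set (X →ₗ[ℝ] ℝ) :=
  {f | ∀ x ∈ Ω, f (x - xbar) ≤ 0}

/-- Extremal system of two sets in a vector space. -/
def IsExtremal {X : Type*} [AddCommGroup X] [Module ℝ X] (Ω₁ Ω₂ : Set X) : Prop :=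
  ∃ x₀ : X, ∀ δ : ℝ, 0 < δ → ∃ t₀ : ℝ, |t₀| < δ ∧
    ((fun w => w + t₀ • x₀) '' Ω₁) ∩ Ω₂ = ∅

/-- Domain of a set-valued mapping. -/
def svDom {X Y : Type*} (F : X → Set Y) : Set X := {x | (F x).Nonempty}

/-- Graph of a set-valued mapping. -/
def svGraph {X Y : Type*} (F : X → Set Y) : Set (X × Y) := {p | p.2 ∈ F p.1}

/-- Coderivative of a set-valued mapping `F` at `(xbar, ybar) ∈ gph F` applied to a linear
functional `g`: the set of linear `f` with `(f, -g)` in the normal cone to the graph. -/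
def coderiv {X Y : Type*} [AddCommGroup X] [Module ℝ X] [AddCommGroup Y] [Module ℝ Y]
    (F : X → Set Y) (xbar : X) (ybar : Y) (g : Y →ₗ[ℝ] ℝ) : Set (X →ₗ[ℝ] ℝ) :=
  {f | ∀ x : X, ∀ y ∈ F x, f (x - xbar) - g (y - ybar) ≤ 0}

/-- Subdifferential (of linear functionals) of an extended-real-valued function. -/
def subdiff {X : Type*} [AddCommGroup X] [Module ℝ X] (φ : X → EReal) (xbar : X) :
    Set (X →ₗ[ℝ] ℝ) :=
  {f | ∀ x : X, φ xbar + (f (x - xbar) : EReal) ≤ φ x}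

/-- Effective domain of an extended-real-valued function with values in `ℝ ∪ {+∞}`. -/
def fDom {X : Type*} (φ : X → EReal) : Set X := {x | φ x < ⊤}

/-- Epigraph of an extended-real-valued function. -/
def epi {X : Type*} (φ : X → EReal) : Set (X × ℝ) := {p | φ p.1 ≤ (p.2 : EReal)}

/-- Convexity of an extended-real-valued function (with values in `ℝ ∪ {+∞}`). -/
def ConvexFun {X : Type*} [AddCommGroup X] [Module ℝ X] (φ : X → EReal) : Prop :=
  ∀ x y : X, ∀ t : ℝ, 0 ≤ t → t ≤ 1 →
    φ (t • x + (1 - t) • y) ≤ (t : EReal) * φ x + ((1 - t : ℝ) : EReal) * φ y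

/-- Composition of set-valued mappings. -/
def svComp {X Y Z : Type*} (G : Y → Set Z) (F : X → Set Y) : X → Set Z :=
  fun x => ⋃ y ∈ F x, G y

/-- The linear functional on `X × Y` identified with a pair `(f, g)` of linear
functionals on `X` and `Y`. -/
def pairFun {X Y : Type*} [AddCommGroup X] [Module ℝ X] [AddCommGroup Y] [Module ℝ Y]
    (f : X →ₗ[ℝ] ℝ) (g : Y →ₗ[ℝ] ℝ) : X × Y →ₗ[ℝ] ℝ :=
  f ∘ₗ LinearMap.fst ℝ X Y + g ∘ₗ LinearMap.snd ℝ X Y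


/-! Extremality of `{Ω₁, Ω₂}` forces `0 ∉ core (Ω₁ - Ω₂)`: otherwise `-t • x₀ ∈ Ω₁ - Ω₂` for all
small `t`, i.e. every small translate `Ω₁ + t • x₀` meets `Ω₂`. It remains to separate a point off
the core of a convex core-solid set `C` from `C`. Translate a core point to `0`; then the Minkowski
gauge of `C` is a finite sublinear functional, and it is at least `1` off the core, because
`r • c` lies in the core for `c ∈ C` and `0 ≤ r < 1`. Hahn–Banach gives a linear functional below
the gauge that agrees with it at the given point. -/

open Filter Topology

section

variable {X : Type*} [AddCommGroup X] [Module ℝ X]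

theorem mem_algCore_iff {Ω : Set X} {x : X} :
    x ∈ algCore Ω ↔ ∀ v : X, ∀ᶠ t in 𝓝 (0 : ℝ), x + t • v ∈ Ω := by
  simp only [algCore, Metric.eventually_nhds_iff, Real.dist_eq, sub_zero]
  refine ⟨fun h ↦ h.2, fun h ↦ ⟨?_, h⟩⟩
  obtain ⟨δ, hδ, hx⟩ := h 0
  simpa using @hx 0 (by rwa [abs_zero])

theorem mem_algCore_preimage_add_right {Ω : Set X} {a x : X} :
    x ∈ algCore ((· + a) ⁻¹' Ω) ↔ x + a ∈ algCore Ω := by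
  simp only [mem_algCore_iff, mem_preimage, add_right_comm]

theorem absorbent_of_zero_mem_algCore {C : Set X} (h₀ : (0 : X) ∈ algCore C) :
    Absorbent ℝ C :=
  absorbent_iff_eventually_nhdsNE_zero.2 fun v ↦
    (by simpa using mem_algCore_iff.1 h₀ v : ∀ᶠ t in 𝓝 (0 : ℝ), t • v ∈ C).filter_mono
      nhdsWithin_le_nhds

theorem Convex.smul_mem_algCore {C : Set X} (hC : Convex ℝ C) (h₀ : (0 : X) ∈ algCore C)
    {c : X} (hc : c ∈ C) {r : ℝ} (hr₀ : 0 ≤ r) (hr₁ : r < 1) : r • c ∈ algCore C := by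
  have hr : 1 - r ≠ 0 := by linarith
  refine mem_algCore_iff.2 fun v ↦ ?_
  have hscale : Tendsto (fun t : ℝ ↦ t / (1 - r)) (𝓝 0) (𝓝 0) := by
    simpa using (continuous_id.div_const (1 - r)).tendsto 0
  filter_upwards [hscale.eventually (mem_algCore_iff.1 h₀ v)] with t ht
  rw [zero_add] at ht
  have := hC hc ht hr₀ (by linarith) (add_sub_cancel r 1)
  rwa [smul_smul, mul_div_cancel₀ t hr] at this

theorem Convex.one_le_gauge_of_notMem_algCore {C : Set X} (hC : Convex ℝ C)
    (h₀ : (0 : X) ∈ algCore C) {p : X} (hp : p ∉ algCore C) : 1 ≤ gauge C p := by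
  by_contra! hlt
  obtain ⟨r, hr₀, hr₁, c, hc, rfl⟩ :=
    exists_lt_of_gauge_lt (absorbent_of_zero_mem_algCore h₀) hlt
  exact hp (hC.smul_mem_algCore h₀ hc hr₀.le hr₁)

theorem Convex.exists_linearMap_le_gauge_eq {C : Set X} (hC : Convex ℝ C) (habs : Absorbent ℝ C)
    (p : X) :
    ∃ g : X →ₗ[ℝ] ℝ, (∀ x, g x ≤ gauge C x) ∧ g p = gauge C p := by
  have H : ∀ c : ℝ, c • p = 0 → c • gauge C p = 0 := fun c hc ↦ by
    rcases smul_eq_zero.1 hc with rfl | rfl <;> simp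
  let f : X →ₗ.[ℝ] ℝ := LinearPMap.mkSpanSingleton' p (gauge C p) H
  have hf : ∀ x : f.domain, f x ≤ gauge C x := by
    rintro ⟨x, hx⟩
    obtain ⟨c, rfl⟩ := Submodule.mem_span_singleton.1 hx
    rw [LinearPMap.mkSpanSingleton'_apply, RingHom.id_apply, smul_eq_mul]
    rcases le_or_gt 0 c with hc | hc
    · rw [gauge_smul_of_nonneg hc, smul_eq_mul]
    · exact (mul_nonpos_of_nonpos_of_nonneg hc.le (gauge_nonneg p)).trans (gauge_nonneg _)
  obtain ⟨g, hgf, hg⟩ := exists_extension_of_le_sublinear f (gauge C)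
    (fun c hc x ↦ gauge_smul_of_nonneg hc.le x) (gauge_add_le hC habs) hf
  have hp : p ∈ f.domain := Submodule.mem_span_singleton_self p
  refine ⟨g, hg, ?_⟩
  rw [← f.domain.coe_mk p hp, hgf]
  exact LinearPMap.mkSpanSingleton'_apply_self _ _ _ _

theorem Convex.exists_ne_zero_le_of_notMem_algCore {C : Set X} (hC : Convex ℝ C) {a p : X}
    (ha : a ∈ algCore C) (hp : p ∉ algCore C) : ∃ f : X →ₗ[ℝ] ℝ, f ≠ 0 ∧ ∀ c ∈ C, f c ≤ f p := by
  set D := (· + a) ⁻¹' C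
  have hD : Convex ℝ D := hC.translate_preimage_left a
  have h₀ : (0 : X) ∈ algCore D := mem_algCore_preimage_add_right.2 (by rwa [zero_add])
  have hpD : p - a ∉ algCore D := by rwa [mem_algCore_preimage_add_right, sub_add_cancel]
  obtain ⟨g, hg, hgp⟩ :=
    hD.exists_linearMap_le_gauge_eq (absorbent_of_zero_mem_algCore h₀) (p - a)
  have hg₁ : 1 ≤ g (p - a) := hgp ▸ hD.one_le_gauge_of_notMem_algCore h₀ hpD
  refine ⟨g, fun h ↦ by rw [h, LinearMap.zero_apply] at hg₁; linarith, fun c hc ↦ ?_⟩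
  have hcD : c - a ∈ D := by simpa [D] using hc
  have := (hg (c - a)).trans (gauge_le_one_of_mem hcD)
  rw [map_sub] at this hg₁
  linarith

theorem IsExtremal.zero_notMem_algCore_sub {Ω₁ Ω₂ : Set X} (hext : IsExtremal Ω₁ Ω₂) :
    (0 : X) ∉ algCore (Ω₁ - Ω₂) := by
  rintro ⟨-, hcore⟩
  obtain ⟨x₀, hx₀⟩ := hext
  obtain ⟨δ, hδ, hmem⟩ := hcore x₀
  obtain ⟨t₀, ht₀, hdisj⟩ := hx₀ δ hδ
  obtain ⟨x, hx, y, hy, hxy⟩ := mem_sub.1 (by simpa using hmem (-t₀) (by simpa using ht₀))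
  have hyx : x + t₀ • x₀ = y := by
    rw [← sub_eq_zero, add_sub_right_comm, hxy, neg_add_cancel]
  exact (eq_empty_iff_forall_notMem.1 hdisj) y ⟨⟨x, hx, hyx⟩, hy⟩

end

theorem extremal_implies_separation_general {X : Type*} [AddCommGroup X] [Module ℝ X]
    {Ω₁ Ω₂ : Set X}
    (hconv₁ : Convex ℝ Ω₁) (hconv₂ : Convex ℝ Ω₂)
    (hext : IsExtremal Ω₁ Ω₂) (hsolid : (algCore (Ω₁ - Ω₂)).Nonempty) :
    ∃ f : X →ₗ[ℝ] ℝ, f ≠ 0 ∧ ∀ x ∈ Ω₁, ∀ y ∈ Ω₂, f x ≤ f y := by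
  obtain ⟨a, ha⟩ := hsolid
  obtain ⟨f, hf₀, hf⟩ :=
    (hconv₁.sub hconv₂).exists_ne_zero_le_of_notMem_algCore ha hext.zero_notMem_algCore_sub
  refine ⟨f, hf₀, fun x hx y hy ↦ ?_⟩
  have := hf (x - y) (sub_mem_sub hx hy)
  rw [map_sub, map_zero] at this
  linarith

/-- an extremal system of nonempty convex sets with core-solid
difference is separated by a hyperplane. -/
theorem extremal_implies_separation {X : Type*} [AddCommGroup X] [Module ℝ X]
    {Ω₁ Ω₂ : Set X} (hne₁ : Ω₁.Nonempty) (hne₂ : Ω₂.Nonempty)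
    (hconv₁ : Convex ℝ Ω₁) (hconv₂ : Convex ℝ Ω₂)
    (hext : IsExtremal Ω₁ Ω₂) (hsolid : (algCore (Ω₁ - Ω₂)).Nonempty) :
    ∃ f : X →ₗ[ℝ] ℝ, f ≠ 0 ∧ ∀ x ∈ Ω₁, ∀ y ∈ Ω₂, f x ≤ f y :=
  extremal_implies_separation_general hconv₁ hconv₂ hext hsolid
end

section
/- Let F : X ⇒ Y and G : Y ⇒ Z be set-valued mappings between real vector spaces whose graphs are convex. Assume that the graph of F is core-solid and that there exists x ∈ core(dom(F)) with core(F(x)) ∩ dom(G) ≠ ∅. Then for every (x̄, z̄) ∈ gph(G ∘ F), every ȳ ∈ F(x̄) ∩ G⁻¹(z̄), and every linear function h : Z → ℝ, one has D*(G ∘ F)(x̄, z̄)(h) = D*F(x̄, ȳ)(D*G(ȳ, z̄)(h)) := ∪{D*F(x̄, ȳ)(g) : g ∈ D*G(ȳ, z̄)(h)}, where (G ∘ F)(x) := ∪{G(y) : y ∈ F(x)}. -/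
/-!
The inclusion `⊇` is immediate. For `⊆`, take `f ∈ D*(G ∘ F)(x̄, z̄)(h)`. In `Y × ℝ`, the hypograph
of `y ↦ sup {f (x - x̄) | y ∈ F x}` and the strict epigraph of `y ↦ inf {h (z - z̄) | z ∈ G y}` are
disjoint convex sets, and a point of `core (F x)` gives a core point of the first one.
Hahn–Banach applied to the gauge of their (shifted) difference separates them by a nonzero
functional `(y, r) ↦ φ y + β r` with `β ≥ 0`. If `β = 0`, then `φ` attains its maximum over `F x`
at that core point, as the point lies in `dom G`; so `φ = 0`, which is impossible. Hence `β > 0`,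
and with `g = -φ / β` the separation inequality splits into `g ∈ D*G(ȳ, z̄)(h)` and
`f ∈ D*F(x̄, ȳ)(g)`.
-/

open Pointwise Set

section AlgebraicSeparation

variable {E : Type*} [AddCommGroup E] [Module ℝ E]

lemma absorbent_of_zero_mem_algCore_s11 {D : Set E} (h : (0 : E) ∈ algCore D) : Absorbent ℝ D := by
  rw [absorbent_iff_eventually_nhdsNE_zero]
  intro x
  obtain ⟨δ, hδ, hD⟩ := h.2 x
  refine Filter.Eventually.filter_mono nhdsWithin_le_nhds ?_
  filter_upwards [Metric.ball_mem_nhds (0 : ℝ) hδ] with c hc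
  simpa using hD c (by simpa [Real.dist_eq] using hc)

lemma sub_mem_algCore_sub {A B : Set E} {a b : E} (ha : a ∈ algCore A) (hb : b ∈ B) :
    a - b ∈ algCore (A - B) := by
  refine ⟨sub_mem_sub ha.1 hb, fun v => ?_⟩
  obtain ⟨δ, hδ, hA⟩ := ha.2 v
  exact ⟨δ, hδ, fun t ht => ⟨a + t • v, hA t ht, b, hb, add_sub_right_comm _ _ _⟩⟩

lemma LinearMap.eq_zero_of_forall_le_of_mem_algCore {D : Set E} {a : E} (φ : E →ₗ[ℝ] ℝ)
    (ha : a ∈ algCore D) (hmax : ∀ d ∈ D, φ d ≤ φ a) : φ = 0 := by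
  ext v
  obtain ⟨δ, hδ, hD⟩ := ha.2 v
  have hpos := hmax _ (hD (δ / 2) (by rw [abs_of_pos (by positivity)]; linarith))
  have hneg := hmax _ (hD (-(δ / 2)) (by rw [abs_neg, abs_of_pos (by positivity)]; linarith))
  simp only [map_add, map_smul, smul_eq_mul] at hpos hneg
  simp only [LinearMap.zero_apply]
  nlinarith

lemma exists_eq_one_forall_le_one_of_notMem {D : Set E} {x : E} (hD : Convex ℝ D)
    (h0 : (0 : E) ∈ algCore D) (hx : x ∉ D) : ∃ φ : E →ₗ[ℝ] ℝ, φ x = 1 ∧ ∀ d ∈ D, φ d ≤ 1 := by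
  have habs := absorbent_of_zero_mem_algCore_s11 h0
  have hx0 : x ≠ 0 := fun h => hx (h ▸ h0.1)
  have hgauge : 1 ≤ gauge D x := by
    by_contra! hlt
    exact hx (setOfPred_gauge_lt_one_subset_self hD h0.1 habs hlt)
  let φ₀ : E →ₗ.[ℝ] ℝ := LinearPMap.mkSpanSingleton x 1 hx0
  have hφ₀ : ∀ v : φ₀.domain, φ₀ v ≤ gauge D v := by
    rintro ⟨v, hv⟩
    obtain ⟨c, rfl⟩ := Submodule.mem_span_singleton.1 hv
    rw [LinearPMap.mkSpanSingleton'_apply, smul_eq_mul, mul_one]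
    rcases le_or_gt c 0 with hc | hc
    · exact hc.trans (gauge_nonneg _)
    · rw [gauge_smul_of_nonneg hc.le, smul_eq_mul, RingHom.id_apply]
      nlinarith
  obtain ⟨φ, hφext, hφle⟩ := exists_extension_of_le_sublinear φ₀ (gauge D)
    (fun c hc => gauge_smul_of_nonneg hc.le) (gauge_add_le hD habs) hφ₀
  refine ⟨φ, ?_, fun d hd => (hφle d).trans (gauge_le_one_of_mem hd)⟩
  rw [← φ₀.domain.coe_mk x (Submodule.mem_span_singleton_self x), hφext]
  exact LinearPMap.mkSpanSingleton'_apply_self _ _ _ _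

lemma exists_ne_zero_forall_le_of_disjoint {A B : Set E} (hA : Convex ℝ A) (hB : Convex ℝ B)
    (hAcore : (algCore A).Nonempty) (hBne : B.Nonempty) (hAB : Disjoint A B) :
    ∃ φ : E →ₗ[ℝ] ℝ, φ ≠ 0 ∧ ∀ a ∈ A, ∀ b ∈ B, φ a ≤ φ b := by
  obtain ⟨a₀, ha₀⟩ := hAcore
  obtain ⟨b₀, hb₀⟩ := hBne
  -- shifting `B` by `a₀ - b₀` puts `0 = a₀ - a₀` in the core of `A - B'`
  set B' := (a₀ - b₀) +ᵥ B
  have h0 : (0 : E) ∈ algCore (A - B') := by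
    simpa using sub_mem_algCore_sub ha₀ (vadd_mem_vadd_set (a := a₀ - b₀) hb₀)
  have hx : b₀ - a₀ ∉ A - B' := by
    rintro ⟨a, ha, _, ⟨b, hb, rfl⟩, hab⟩
    refine Set.disjoint_left.1 hAB ha ?_
    rwa [show a = b by simp only [vadd_eq_add] at hab; linear_combination (norm := abel) hab]
  obtain ⟨φ, hφx, hφD⟩ := exists_eq_one_forall_le_one_of_notMem (hA.sub (hB.vadd _)) h0 hx
  refine ⟨φ, fun h => by simp [h] at hφx, fun a ha b hb => ?_⟩
  have := hφD _ (sub_mem_sub ha (vadd_mem_vadd_set (a := a₀ - b₀) hb))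
  simp only [vadd_eq_add, map_sub, map_add] at this hφx
  linarith

end AlgebraicSeparation

section ChainRule

variable {X Y Z : Type*} [AddCommGroup X] [Module ℝ X] [AddCommGroup Z] [Module ℝ Z]

def svHypograph (F : X → Set Y) (f : X →ₗ[ℝ] ℝ) (xbar : X) : Set (Y × ℝ) :=
  {p | ∃ x, p.1 ∈ F x ∧ p.2 ≤ f (x - xbar)}

def svStrictEpigraph (G : Y → Set Z) (h : Z →ₗ[ℝ] ℝ) (zbar : Z) : Set (Y × ℝ) :=
  {p | ∃ z ∈ G p.1, h (z - zbar) < p.2}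

lemma disjoint_svHypograph_svStrictEpigraph {F : X → Set Y} {G : Y → Set Z} {f : X →ₗ[ℝ] ℝ}
    {h : Z →ₗ[ℝ] ℝ} {xbar : X} {zbar : Z} (hf : f ∈ coderiv (svComp G F) xbar zbar h) :
    Disjoint (svHypograph F f xbar) (svStrictEpigraph G h zbar) := by
  refine Set.disjoint_left.2 fun ⟨y, r⟩ ⟨x, hy, hr⟩ ⟨z, hz, hrz⟩ => ?_
  have := hf x z (mem_biUnion hy hz)
  dsimp only at hr hrz
  linarith

variable [AddCommGroup Y] [Module ℝ Y]

lemma convex_svHypograph {F : X → Set Y} (hF : Convex ℝ (svGraph F)) (f : X →ₗ[ℝ] ℝ)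
    (xbar : X) : Convex ℝ (svHypograph F f xbar) := by
  rintro ⟨y₁, r₁⟩ ⟨x₁, hy₁, hr₁⟩ ⟨y₂, r₂⟩ ⟨x₂, hy₂, hr₂⟩ s t hs ht hst
  refine ⟨s • x₁ + t • x₂, hF (x := (x₁, y₁)) (y := (x₂, y₂)) hy₁ hy₂ hs ht hst, ?_⟩
  simp only [map_sub, map_add, map_smul, Prod.smul_mk, Prod.mk_add_mk, smul_eq_mul] at hr₁ hr₂ ⊢
  linear_combination s * hr₁ + t * hr₂ - f xbar * hst

lemma convex_svStrictEpigraph {G : Y → Set Z} (hG : Convex ℝ (svGraph G)) (h : Z →ₗ[ℝ] ℝ)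
    (zbar : Z) : Convex ℝ (svStrictEpigraph G h zbar) := by
  rintro ⟨y₁, r₁⟩ ⟨z₁, hz₁, hr₁⟩ ⟨y₂, r₂⟩ ⟨z₂, hz₂, hr₂⟩ s t hs ht hst
  refine ⟨s • z₁ + t • z₂, hG (x := (y₁, z₁)) (y := (y₂, z₂)) hz₁ hz₂ hs ht hst, ?_⟩
  simp only [map_sub, map_add, map_smul, Prod.smul_mk, Prod.mk_add_mk, smul_eq_mul] at hr₁ hr₂ ⊢
  rcases hs.eq_or_lt with rfl | hs
  · obtain rfl : t = 1 := by linarith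
    linarith
  · linear_combination s * hr₁ + t * hr₂ + h zbar * hst

lemma mem_algCore_svHypograph {F : X → Set Y} {x : X} {y : Y} (hy : y ∈ algCore (F x))
    (f : X →ₗ[ℝ] ℝ) (xbar : X) : (y, f (x - xbar) - 1) ∈ algCore (svHypograph F f xbar) := by
  refine ⟨⟨x, hy.1, by simp⟩, fun ⟨v, s⟩ => ?_⟩
  obtain ⟨δ, hδ, hF⟩ := hy.2 v
  refine ⟨min δ (1 / (|s| + 1)), lt_min hδ (by positivity),
    fun t ht => ⟨x, hF t (ht.trans_le (min_le_left _ _)), ?_⟩⟩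
  have hts : |t| * (|s| + 1) ≤ 1 := by
    rw [← le_div_iff₀ (by positivity)]
    exact ht.le.trans (min_le_right _ _)
  have : t * s ≤ |t| * |s| := by rw [← abs_mul]; exact le_abs_self _
  simp only [Prod.smul_mk, Prod.mk_add_mk, smul_eq_mul]
  nlinarith [abs_nonneg t]

lemma LinearMap.apply_prod_real (l : Y × ℝ →ₗ[ℝ] ℝ) (y : Y) (r : ℝ) :
    l (y, r) = l (y, 0) + r * l (0, 1) := by
  rw [← smul_eq_mul, ← map_smul, ← map_add, Prod.smul_mk, Prod.mk_add_mk, smul_zero, smul_eq_mul,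
    mul_one, add_zero, zero_add]

lemma apply_zero_one_pos_of_separates {F : X → Set Y} {G : Y → Set Z} {f : X →ₗ[ℝ] ℝ}
    {h : Z →ₗ[ℝ] ℝ} {xbar : X} {ybar : Y} {zbar : Z} {l : Y × ℝ →ₗ[ℝ] ℝ} (hl : l ≠ 0)
    (hsep : ∀ a ∈ svHypograph F f xbar, ∀ b ∈ svStrictEpigraph G h zbar, l a ≤ l b)
    (hy : ybar ∈ F xbar) (hz : zbar ∈ G ybar) (hqc : ∃ x, (algCore (F x) ∩ svDom G).Nonempty) :
    0 < l (0, 1) := by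
  have hnonneg : 0 ≤ l (0, 1) := by
    have := hsep (ybar, -1) ⟨xbar, hy, by simp⟩ (ybar, 1) ⟨zbar, hz, by simp⟩
    rw [l.apply_prod_real ybar (-1), l.apply_prod_real ybar 1] at this
    linarith
  refine hnonneg.lt_of_ne' fun hβ => hl ?_
  obtain ⟨x, y₀, hy₀, z₀, hz₀⟩ := hqc
  have hinl : l ∘ₗ LinearMap.inl ℝ Y ℝ = 0 := by
    refine (l ∘ₗ LinearMap.inl ℝ Y ℝ).eq_zero_of_forall_le_of_mem_algCore hy₀ fun y hy => ?_
    have := hsep (y, f (x - xbar)) ⟨x, hy, le_rfl⟩ (y₀, h (z₀ - zbar) + 1) ⟨z₀, hz₀, by simp⟩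
    rw [l.apply_prod_real y, l.apply_prod_real y₀, hβ] at this
    simpa using this
  exact LinearMap.prod_ext hinl (LinearMap.ext_ring (by simpa using hβ))

lemma exists_mem_coderiv_of_separates {F : X → Set Y} {G : Y → Set Z} {f : X →ₗ[ℝ] ℝ}
    {h : Z →ₗ[ℝ] ℝ} {xbar : X} {ybar : Y} {zbar : Z} {l : Y × ℝ →ₗ[ℝ] ℝ} (hβ : 0 < l (0, 1))
    (hsep : ∀ a ∈ svHypograph F f xbar, ∀ b ∈ svStrictEpigraph G h zbar, l a ≤ l b)
    (hy : ybar ∈ F xbar) (hz : zbar ∈ G ybar) :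
    ∃ g ∈ coderiv G ybar zbar h, f ∈ coderiv F xbar ybar g := by
  set g : Y →ₗ[ℝ] ℝ := -(l (0, 1))⁻¹ • l ∘ₗ LinearMap.inl ℝ Y ℝ
  have hl : ∀ y r, l (y, r) = l (0, 1) * (r - g y) := by
    intro y r
    rw [l.apply_prod_real]
    simp only [g, LinearMap.smul_apply, LinearMap.comp_apply, LinearMap.inl_apply, smul_eq_mul]
    field_simp
    ring
  have key : ∀ x y, y ∈ F x → ∀ y' z, z ∈ G y' → f (x - xbar) - g y ≤ h (z - zbar) - g y' := by
    intro x y hy y' z hz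
    refine le_of_forall_pos_le_add fun ε hε => ?_
    have := hsep (y, f (x - xbar)) ⟨x, hy, le_rfl⟩ (y', h (z - zbar) + ε)
      ⟨z, hz, lt_add_of_pos_right _ hε⟩
    rw [hl y, hl y'] at this
    linarith [le_of_mul_le_mul_left this hβ]
  refine ⟨g, fun y' z hz' => ?_, fun x y hy' => ?_⟩
  · have := key xbar ybar hy y' z hz'
    simp only [sub_self, map_zero, map_sub] at this ⊢
    linarith
  · have := key x y hy' ybar zbar hz
    simp only [sub_self, map_zero, map_sub] at this ⊢
    linarith

lemma iUnion_coderiv_subset_coderiv_svComp (F : X → Set Y) (G : Y → Set Z) (xbar : X) (ybar : Y)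
    (zbar : Z) (h : Z →ₗ[ℝ] ℝ) :
    ⋃ g ∈ coderiv G ybar zbar h, coderiv F xbar ybar g ⊆ coderiv (svComp G F) xbar zbar h := by
  simp only [iUnion_subset_iff]
  intro g hg f hf x z hz
  obtain ⟨y, hy, hz⟩ := mem_iUnion₂.1 hz
  linarith [hf x y hy, hg y z hz]

lemma coderiv_svComp_subset_iUnion_coderiv {F : X → Set Y} {G : Y → Set Z}
    (hF : Convex ℝ (svGraph F)) (hG : Convex ℝ (svGraph G))
    (hqc : ∃ x, (algCore (F x) ∩ svDom G).Nonempty) {xbar : X} {ybar : Y} {zbar : Z}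
    (hy : ybar ∈ F xbar) (hz : zbar ∈ G ybar) (h : Z →ₗ[ℝ] ℝ) :
    coderiv (svComp G F) xbar zbar h ⊆ ⋃ g ∈ coderiv G ybar zbar h, coderiv F xbar ybar g := by
  intro f hf
  obtain ⟨x₀, y₀, hy₀, hdom⟩ := hqc
  obtain ⟨l, hl, hsep⟩ := exists_ne_zero_forall_le_of_disjoint (convex_svHypograph hF f xbar)
    (convex_svStrictEpigraph hG h zbar) ⟨_, mem_algCore_svHypograph hy₀ f xbar⟩
    ⟨(ybar, 1), zbar, hz, by simp⟩ (disjoint_svHypograph_svStrictEpigraph hf)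
  have hβ := apply_zero_one_pos_of_separates hl hsep hy hz ⟨x₀, y₀, hy₀, hdom⟩
  obtain ⟨g, hg, hfg⟩ := exists_mem_coderiv_of_separates hβ hsep hy hz
  exact mem_iUnion₂.2 ⟨g, hg, hfg⟩

end ChainRule

theorem coderivative_chain_rule_qc1_general {X Y Z : Type*} [AddCommGroup X] [Module ℝ X]
    [AddCommGroup Y] [Module ℝ Y] [AddCommGroup Z] [Module ℝ Z]
    (F : X → Set Y) (G : Y → Set Z)
    (hconvF : Convex ℝ (svGraph F)) (hconvG : Convex ℝ (svGraph G))
    (hqc : ∃ x : X, x ∈ algCore (svDom F) ∧ (algCore (F x) ∩ svDom G).Nonempty)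
    (xbar : X) (zbar : Z)
    (ybar : Y) (hybar : ybar ∈ F xbar ∧ zbar ∈ G ybar) (h : Z →ₗ[ℝ] ℝ) :
    coderiv (svComp G F) xbar zbar h =
      ⋃ g ∈ coderiv G ybar zbar h, coderiv F xbar ybar g :=
  Subset.antisymm
    (coderiv_svComp_subset_iUnion_coderiv hconvF hconvG (hqc.imp fun _ => And.right)
      hybar.1 hybar.2 h)
    (iUnion_coderiv_subset_coderiv_svComp F G xbar ybar zbar h)

/-- coderivative chain rule for convex set-valued mappings under the
first core qualification condition. -/
theorem coderivative_chain_rule_qc1 {X Y Z : Type*} [AddCommGroup X] [Module ℝ X]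
    [AddCommGroup Y] [Module ℝ Y] [AddCommGroup Z] [Module ℝ Z]
    (F : X → Set Y) (G : Y → Set Z)
    (hconvF : Convex ℝ (svGraph F)) (hconvG : Convex ℝ (svGraph G))
    (hsolid : (algCore (svGraph F)).Nonempty)
    (hqc : ∃ x : X, x ∈ algCore (svDom F) ∧ (algCore (F x) ∩ svDom G).Nonempty)
    (xbar : X) (zbar : Z) (hxz : zbar ∈ svComp G F xbar)
    (ybar : Y) (hybar : ybar ∈ F xbar ∧ zbar ∈ G ybar) (h : Z →ₗ[ℝ] ℝ) :
    coderiv (svComp G F) xbar zbar h =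
      ⋃ g ∈ coderiv G ybar zbar h, coderiv F xbar ybar g :=
  coderivative_chain_rule_qc1_general F G hconvF hconvG hqc xbar zbar ybar hybar h
end

section
/- Let F : X ⇒ Y and G : Y ⇒ Z be set-valued mappings between real vector spaces whose graphs are convex. Assume that the graph of G is core-solid and that there exists (x, y) ∈ X × Y with y ∈ F(x) ∩ core(dom(G)) and core(G(y)) ≠ ∅. Then for every (x̄, z̄) ∈ gph(G ∘ F), every ȳ ∈ F(x̄) ∩ G⁻¹(z̄), and every linear function h : Z → ℝ, one has D*(G ∘ F)(x̄, z̄)(h) = D*F(x̄, ȳ)(D*G(ȳ, z̄)(h)) := ∪{D*F(x̄, ȳ)(g) : g ∈ D*G(ȳ, z̄)(h)}, where (G ∘ F)(x) := ∪{G(y) : y ∈ F(x)}. -/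
open Pointwise Set

/-! For `f ∈ D*(G ∘ F)(x̄, z̄)(h)` consider in `Y × ℝ` the hypograph `A` of
`y ↦ sup {f (x - x̄) | y ∈ F x}` and the epigraph `B` of `y ↦ inf {h (z - z̄) | z ∈ G y}`.
The coderivative inequality says that `A` misses the core of `B`, so the algebraic
Hahn–Banach theorem (with the gauge of a convex set around a core point as sublinear majorant)
separates them by a linear functional. The qualification condition gives a point of `A` strictly
below a core point of `B` on the same vertical line, so the separating hyperplane is the graph of
a linear `g : Y → ℝ`; its two one-sided inequalities are `g ∈ D*G(ȳ, z̄)(h)` and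
`f ∈ D*F(x̄, ȳ)(g)`. To get a core point of `gph G` over `F(X)` one lifts a core point of `dom G`
to a core point of the graph over it and then moves inside the fibre. -/

open Filter Topology

section AlgebraicCore

variable {E : Type*} [AddCommGroup E] [Module ℝ E] {Ω : Set E}

theorem Convex.combo_algCore_mem_algCore (hΩ : Convex ℝ Ω) {x y : E} (hx : x ∈ algCore Ω)
    (hy : y ∈ Ω) {a b : ℝ} (ha : 0 < a) (hb : 0 ≤ b) (hab : a + b = 1) :
    a • x + b • y ∈ algCore Ω := by
  refine ⟨hΩ hx.1 hy ha.le hb hab, fun v => ?_⟩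
  obtain ⟨δ, hδ, hmem⟩ := hx.2 v
  refine ⟨a * δ, by positivity, fun t ht => ?_⟩
  have hta : |t / a| < δ := by
    rwa [abs_div, abs_of_pos ha, div_lt_iff₀ ha, mul_comm]
  convert hΩ (hmem _ hta) hy ha.le hb hab using 1
  rw [smul_add, smul_smul, mul_div_cancel₀ _ ha.ne']
  abel

theorem convex_algCore (hΩ : Convex ℝ Ω) : Convex ℝ (algCore Ω) := by
  intro x hx y hy a b ha hb hab
  rcases ha.eq_or_lt with rfl | ha
  · rw [zero_add] at hab
    simpa [hab] using hy
  · exact hΩ.combo_algCore_mem_algCore hx hy.1 ha hb hab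

theorem Convex.algCore_algCore (hΩ : Convex ℝ Ω) : algCore (algCore Ω) = algCore Ω := by
  refine Subset.antisymm (fun x hx => hx.1) fun x hx => ⟨hx, fun v => ?_⟩
  obtain ⟨δ, hδ, hmem⟩ := hx.2 v
  refine ⟨δ / 2, by positivity, fun t ht => ?_⟩
  have h2t : |2 * t| < δ := by rw [abs_mul, abs_two]; linarith
  convert hΩ.combo_algCore_mem_algCore hx (hmem _ h2t) one_half_pos one_half_pos.le
    (add_halves 1) using 1
  module

theorem Convex.mem_algCore_of_add_smul_sub_mem (hΩ : Convex ℝ Ω) {c x : E}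
    (hc : c ∈ algCore Ω) {θ : ℝ} (hθ : 0 < θ) (hx : x + θ • (x - c) ∈ Ω) : x ∈ algCore Ω := by
  convert hΩ.combo_algCore_mem_algCore hc hx (a := θ / (1 + θ)) (b := 1 / (1 + θ))
    (by positivity) (by positivity) (by field_simp; ring) using 1
  match_scalars
  · field_simp
  · field_simp; ring

theorem Convex.le_of_forall_algCore_lt (hΩ : Convex ℝ Ω) (hcore : (algCore Ω).Nonempty)
    (ℓ : E →ₗ[ℝ] ℝ) {r : ℝ} (h : ∀ x ∈ algCore Ω, ℓ x < r) {x : E} (hx : x ∈ Ω) : ℓ x ≤ r := by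
  obtain ⟨c, hc⟩ := hcore
  have hlim : Tendsto (fun t : ℝ => t * ℓ c + (1 - t) * ℓ x) (𝓝[>] 0) (𝓝 (ℓ x)) :=
    ((Continuous.tendsto' (by fun_prop) 0 _ (by simp))).mono_left nhdsWithin_le_nhds
  refine le_of_tendsto hlim ?_
  filter_upwards [Ioc_mem_nhdsGT zero_lt_one] with t ⟨ht0, ht1⟩
  have := h _ (hΩ.combo_algCore_mem_algCore hc hx ht0 (sub_nonneg.2 ht1) (add_sub_cancel _ _))
  rw [map_add, map_smul, map_smul, smul_eq_mul, smul_eq_mul] at this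
  exact this.le

theorem absorbent_of_zero_mem_algCore_s12 (h : 0 ∈ algCore Ω) : Absorbent ℝ Ω := by
  refine absorbent_iff_eventually_nhdsNE_zero.2 fun v => ?_
  obtain ⟨δ, hδ, hmem⟩ := h.2 v
  filter_upwards [nhdsWithin_le_nhds (Metric.ball_mem_nhds (0 : ℝ) hδ)] with t ht
  simpa using hmem t (by simpa using ht)

theorem gauge_lt_one_of_mem_algCore {x : E} (hx : x ∈ algCore Ω) : gauge Ω x < 1 := by
  obtain ⟨δ, hδ, hmem⟩ := hx.2 x
  have hpos : (0 : ℝ) < 1 + δ / 2 := by positivity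
  have hmem' : (1 + δ / 2) • x ∈ Ω := by
    simpa [add_smul] using hmem (δ / 2) (by rw [abs_of_pos (by positivity)]; linarith)
  calc gauge Ω x ≤ (1 + δ / 2)⁻¹ :=
        gauge_le_of_mem (by positivity) ⟨_, hmem', by simp [smul_smul, hpos.ne']⟩
    _ < 1 := inv_lt_one_of_one_lt₀ (by linarith)

end AlgebraicCore

section Separation

variable {E : Type*} [AddCommGroup E] [Module ℝ E] {s t : Set E}

theorem exists_linear_eq_one_lt_one_of_subset_algCore (hs₀ : (0 : E) ∈ s) (hs₁ : Convex ℝ s)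
    (hs₂ : s ⊆ algCore s) {x₀ : E} (hx₀ : x₀ ∉ s) :
    ∃ f : E →ₗ[ℝ] ℝ, f x₀ = 1 ∧ ∀ x ∈ s, f x < 1 := by
  have habs : Absorbent ℝ s := absorbent_of_zero_mem_algCore_s12 (hs₂ hs₀)
  let f : E →ₗ.[ℝ] ℝ := LinearPMap.mkSpanSingleton x₀ 1 (ne_of_mem_of_not_mem hs₀ hx₀).symm
  obtain ⟨φ, hφ₁, hφ₂⟩ := exists_extension_of_le_sublinear f (gauge s)
    (fun c hc => gauge_smul_of_nonneg hc.le) (gauge_add_le hs₁ habs) (by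
      rintro ⟨x, hx⟩
      obtain ⟨y, rfl⟩ := Submodule.mem_span_singleton.1 hx
      rw [LinearPMap.mkSpanSingleton'_apply, smul_eq_mul, mul_one]
      rcases le_or_gt y 0 with h | h
      · exact h.trans (gauge_nonneg _)
      · rw [gauge_smul_of_nonneg h.le, smul_eq_mul, RingHom.id_apply, le_mul_iff_one_le_right h]
        exact one_le_gauge_of_notMem (hs₁.starConvex hs₀) habs.absorbs hx₀)
  refine ⟨φ, ?_, fun x hx => (hφ₂ x).trans_lt (gauge_lt_one_of_mem_algCore (hs₂ hx))⟩
  exact (hφ₁ ⟨x₀, Submodule.mem_span_singleton_self _⟩).trans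
    (LinearPMap.mkSpanSingleton'_apply_self _ _ _ _)

theorem vadd_sub_subset_algCore (hs : s ⊆ algCore s) (x : E) :
    x +ᵥ (s - t) ⊆ algCore (x +ᵥ (s - t)) := by
  rintro _ ⟨_, ⟨a, ha, b, hb, rfl⟩, rfl⟩
  refine ⟨vadd_mem_vadd_set (sub_mem_sub ha hb), fun v => ?_⟩
  obtain ⟨δ, hδ, hmem⟩ := (hs ha).2 v
  refine ⟨δ, hδ, fun r hr => ⟨a + r • v - b, sub_mem_sub (hmem r hr) hb, ?_⟩⟩
  simp only [vadd_eq_add]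
  abel

theorem exists_linear_lt_of_disjoint (hs₁ : Convex ℝ s) (hs₂ : s ⊆ algCore s)
    (ht : Convex ℝ t) (disj : Disjoint s t) : ∃ f : E →ₗ[ℝ] ℝ, ∀ a ∈ s, ∀ b ∈ t, f a < f b := by
  obtain rfl | ⟨a₀, ha₀⟩ := s.eq_empty_or_nonempty
  · exact ⟨0, by simp⟩
  obtain rfl | ⟨b₀, hb₀⟩ := t.eq_empty_or_nonempty
  · exact ⟨0, by simp⟩
  let x₀ := b₀ - a₀
  have h0 : (0 : E) ∈ x₀ +ᵥ (s - t) := ⟨a₀ - b₀, sub_mem_sub ha₀ hb₀, by simp [x₀]⟩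
  have hx₀ : x₀ ∉ x₀ +ᵥ (s - t) := fun h =>
    disj.zero_notMem_sub_set (vadd_mem_vadd_set_iff.1 (by rwa [vadd_eq_add, add_zero]))
  obtain ⟨f, hf₁, hf₂⟩ := exists_linear_eq_one_lt_one_of_subset_algCore h0
    ((hs₁.sub ht).vadd x₀) (vadd_sub_subset_algCore hs₂ x₀) hx₀
  refine ⟨f, fun a ha b hb => ?_⟩
  have := hf₂ _ (vadd_mem_vadd_set (sub_mem_sub ha hb))
  simp only [x₀, vadd_eq_add, map_add, map_sub] at this hf₁
  linarith

theorem exists_linear_sub_le_sub_of_disjoint_algCore {A B : Set (E × ℝ)} (hA : Convex ℝ A)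
    (hB : Convex ℝ B) (hAB : Disjoint (algCore B) A) {a b : E × ℝ} (ha : a ∈ A)
    (hb : b ∈ algCore B) (hab₁ : b.1 = a.1) (hab₂ : a.2 < b.2) :
    ∃ g : E →ₗ[ℝ] ℝ, ∀ p ∈ B, ∀ q ∈ A, g p.1 - p.2 ≤ g q.1 - q.2 := by
  obtain ⟨ℓ, hℓ⟩ := exists_linear_lt_of_disjoint (convex_algCore hB)
    hB.algCore_algCore.superset hA hAB
  have hle : ∀ p ∈ B, ∀ q ∈ A, ℓ p ≤ ℓ q := fun p hp q hq =>
    hB.le_of_forall_algCore_lt ⟨b, hb⟩ ℓ (fun p' hp' => hℓ p' hp' q hq) hp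
  have hsplit : ∀ p : E × ℝ, ℓ p = ℓ (p.1, 0) + p.2 * ℓ (0, 1) := fun p => by
    rw [← smul_eq_mul, ← map_smul, ← map_add, Prod.smul_mk, smul_zero, smul_eq_mul, mul_one,
      Prod.mk_add_mk, add_zero, zero_add]
  set c := ℓ (0, 1)
  -- `a` and `b` lie on a common vertical line, so the hyperplane `ℓ = const` is not vertical.
  have hc : c < 0 := by
    have := hℓ b hb a ha
    rw [hsplit b, hsplit a, hab₁] at this
    nlinarith
  refine ⟨(-c)⁻¹ • (ℓ ∘ₗ LinearMap.inl ℝ E ℝ), fun p hp q hq => ?_⟩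
  have := hle p hp q hq
  rw [hsplit p, hsplit q] at this
  simp only [LinearMap.smul_apply, LinearMap.comp_apply, LinearMap.inl_apply, smul_eq_mul]
  have hcc : (-c)⁻¹ * c = -1 := by field_simp [hc.ne]
  linear_combination
    mul_le_mul_of_nonneg_left this (inv_nonneg.2 (neg_nonneg.2 hc.le)) + (q.2 - p.2) * hcc

end Separation

theorem algCore_image_subset_image_algCore {E F : Type*} [AddCommGroup E] [Module ℝ E]
    [AddCommGroup F] [Module ℝ F] (π : E →ₗ[ℝ] F) {Ω : Set E} (hΩ : Convex ℝ Ω) {c : E}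
    (hc : c ∈ algCore Ω) : algCore (π '' Ω) ⊆ π '' algCore Ω := by
  intro y hy
  obtain ⟨δ, hδ, hmem⟩ := hy.2 (y - π c)
  obtain ⟨q, hq, hπq⟩ := hmem (δ / 2) (by rw [abs_of_pos (by positivity)]; linarith)
  refine ⟨(δ / 2 / (1 + δ / 2)) • c + (1 / (1 + δ / 2)) • q,
    hΩ.combo_algCore_mem_algCore hc hq (by positivity) (by positivity) (by field_simp; ring), ?_⟩
  rw [map_add, map_smul, map_smul, hπq]
  match_scalars
  · field_simp
    ring
  · field_simp

theorem mk_mem_algCore_of_mem_algCore_fiber {Y Z : Type*} [AddCommGroup Y] [Module ℝ Y]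
    [AddCommGroup Z] [Module ℝ Z] {Ω : Set (Y × Z)} (hΩ : Convex ℝ Ω) {y : Y} {z z' : Z}
    (hz' : (y, z') ∈ algCore Ω) (hz : z ∈ algCore {w | (y, w) ∈ Ω}) : (y, z) ∈ algCore Ω := by
  obtain ⟨δ, hδ, hmem⟩ := hz.2 (z - z')
  refine hΩ.mem_algCore_of_add_smul_sub_mem hz' (half_pos hδ) ?_
  simpa using hmem (δ / 2) (by rw [abs_of_pos (half_pos hδ)]; linarith)

section Coderivative

variable {X Y Z : Type*} [AddCommGroup X] [Module ℝ X] [AddCommGroup Y] [Module ℝ Y]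
  [AddCommGroup Z] [Module ℝ Z]

theorem mk_mem_algCore_svGraph {G : Y → Set Z} (hG : Convex ℝ (svGraph G))
    (hsolid : (algCore (svGraph G)).Nonempty) {y : Y} {z : Z} (hy : y ∈ algCore (svDom G))
    (hz : z ∈ algCore (G y)) : (y, z) ∈ algCore (svGraph G) := by
  obtain ⟨c, hc⟩ := hsolid
  have hdom : svDom G = LinearMap.fst ℝ Y Z '' svGraph G := by
    ext y'
    simp [svDom, svGraph, Set.Nonempty]
  rw [hdom] at hy
  obtain ⟨⟨y', z'⟩, hcore, rfl⟩ := algCore_image_subset_image_algCore _ hG hc hy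
  exact mk_mem_algCore_of_mem_algCore_fiber hG hcore hz

def supHypograph (F : X → Set Y) (xbar : X) (f : X →ₗ[ℝ] ℝ) : Set (Y × ℝ) :=
  {p | ∃ x, p.1 ∈ F x ∧ p.2 ≤ f (x - xbar)}

def infEpigraph (G : Y → Set Z) (zbar : Z) (h : Z →ₗ[ℝ] ℝ) : Set (Y × ℝ) :=
  {p | ∃ z ∈ G p.1, h (z - zbar) ≤ p.2}

theorem convex_supHypograph {F : X → Set Y} (hF : Convex ℝ (svGraph F)) (xbar : X)
    (f : X →ₗ[ℝ] ℝ) : Convex ℝ (supHypograph F xbar f) := by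
  rintro ⟨y₁, r₁⟩ ⟨x₁, hx₁, hr₁⟩ ⟨y₂, r₂⟩ ⟨x₂, hx₂, hr₂⟩ a b ha hb hab
  refine ⟨a • x₁ + b • x₂, hF (x := (x₁, y₁)) (y := (x₂, y₂)) hx₁ hx₂ ha hb hab, ?_⟩
  have hcomb : a • x₁ + b • x₂ - xbar = a • (x₁ - xbar) + b • (x₂ - xbar) := by
    linear_combination (norm := module) hab • xbar
  simp only [Prod.snd_add, Prod.smul_snd, smul_eq_mul, hcomb, map_add, map_smul]
  exact add_le_add (mul_le_mul_of_nonneg_left hr₁ ha) (mul_le_mul_of_nonneg_left hr₂ hb)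

theorem convex_infEpigraph {G : Y → Set Z} (hG : Convex ℝ (svGraph G)) (zbar : Z)
    (h : Z →ₗ[ℝ] ℝ) : Convex ℝ (infEpigraph G zbar h) := by
  rintro ⟨y₁, r₁⟩ ⟨z₁, hz₁, hr₁⟩ ⟨y₂, r₂⟩ ⟨z₂, hz₂, hr₂⟩ a b ha hb hab
  refine ⟨a • z₁ + b • z₂, hG (x := (y₁, z₁)) (y := (y₂, z₂)) hz₁ hz₂ ha hb hab, ?_⟩
  have hcomb : a • z₁ + b • z₂ - zbar = a • (z₁ - zbar) + b • (z₂ - zbar) := by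
    linear_combination (norm := module) hab • zbar
  simp only [Prod.snd_add, Prod.smul_snd, smul_eq_mul, hcomb, map_add, map_smul]
  exact add_le_add (mul_le_mul_of_nonneg_left hr₁ ha) (mul_le_mul_of_nonneg_left hr₂ hb)

theorem mk_add_one_mem_algCore_infEpigraph {G : Y → Set Z} {y : Y} {z : Z}
    (hyz : (y, z) ∈ algCore (svGraph G)) (zbar : Z) (h : Z →ₗ[ℝ] ℝ) :
    (y, h (z - zbar) + 1) ∈ algCore (infEpigraph G zbar h) := by
  refine ⟨⟨z, hyz.1, by simp⟩, fun ⟨v, s⟩ => ?_⟩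
  obtain ⟨δ, hδ, hmem⟩ := hyz.2 (v, 0)
  refine ⟨min δ (|s| + 1)⁻¹, by positivity, fun t ht => ⟨z, ?_, ?_⟩⟩
  · simpa [svGraph] using hmem t (ht.trans_le (min_le_left _ _))
  · have hts : |t * s| < 1 := calc
      |t * s| ≤ |t| * (|s| + 1) := by rw [abs_mul]; gcongr; linarith
      _ < (|s| + 1)⁻¹ * (|s| + 1) := by gcongr; exact ht.trans_le (min_le_right _ _)
      _ = 1 := inv_mul_cancel₀ (by positivity)
    simp only [Prod.snd_add, Prod.smul_snd, smul_eq_mul]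
    linarith [neg_abs_le (t * s)]

theorem disjoint_algCore_infEpigraph_supHypograph {F : X → Set Y} {G : Y → Set Z} {xbar : X}
    {zbar : Z} {h : Z →ₗ[ℝ] ℝ} {f : X →ₗ[ℝ] ℝ} (hf : f ∈ coderiv (svComp G F) xbar zbar h) :
    Disjoint (algCore (infEpigraph G zbar h)) (supHypograph F xbar f) := by
  rw [Set.disjoint_left]
  rintro ⟨y, r⟩ hcore ⟨x, hx, hr⟩
  obtain ⟨δ, hδ, hmem⟩ := hcore.2 (0, -1)
  obtain ⟨z, hz, hzr⟩ := hmem (δ / 2) (by rw [abs_of_pos (half_pos hδ)]; linarith)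
  simp only [Prod.fst_add, Prod.smul_fst, smul_zero, add_zero, Prod.snd_add, Prod.smul_snd,
    smul_eq_mul] at hz hzr
  linarith [hf x z (mem_biUnion hx hz)]

theorem biUnion_coderiv_subset_coderiv_svComp {F : X → Set Y} {G : Y → Set Z} {xbar : X}
    {ybar : Y} {zbar : Z} {h : Z →ₗ[ℝ] ℝ} :
    ⋃ g ∈ coderiv G ybar zbar h, coderiv F xbar ybar g ⊆ coderiv (svComp G F) xbar zbar h := by
  intro f hf x z hz
  obtain ⟨g, hg, hfg⟩ := mem_iUnion₂.1 hf
  obtain ⟨y, hy, hzy⟩ := mem_iUnion₂.1 hz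
  linarith [hfg x y hy, hg y z hzy]

end Coderivative

theorem coderivative_chain_rule_qc2_general {X Y Z : Type*} [AddCommGroup X] [Module ℝ X]
    [AddCommGroup Y] [Module ℝ Y] [AddCommGroup Z] [Module ℝ Z]
    (F : X → Set Y) (G : Y → Set Z)
    (hconvF : Convex ℝ (svGraph F)) (hconvG : Convex ℝ (svGraph G))
    (hsolid : (algCore (svGraph G)).Nonempty)
    (hqc : ∃ (x : X) (y : Y), y ∈ F x ∧ y ∈ algCore (svDom G) ∧ (algCore (G y)).Nonempty)
    (xbar : X) (zbar : Z)
    (ybar : Y) (hybar : ybar ∈ F xbar ∧ zbar ∈ G ybar) (h : Z →ₗ[ℝ] ℝ) :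
    coderiv (svComp G F) xbar zbar h =
      ⋃ g ∈ coderiv G ybar zbar h, coderiv F xbar ybar g := by
  refine Subset.antisymm (fun f hf => ?_) biUnion_coderiv_subset_coderiv_svComp
  obtain ⟨xq, yq, hyq, hyq_dom, zq, hzq⟩ := hqc
  obtain ⟨g, hg⟩ := exists_linear_sub_le_sub_of_disjoint_algCore
    (convex_supHypograph hconvF xbar f) (convex_infEpigraph hconvG zbar h)
    (disjoint_algCore_infEpigraph_supHypograph hf) (a := (yq, f (xq - xbar))) ⟨xq, hyq, le_rfl⟩
    (mk_add_one_mem_algCore_infEpigraph (mk_mem_algCore_svGraph hconvG hsolid hyq_dom hzq) zbar h)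
    rfl (by linarith [hf xq zq (mem_biUnion hyq hzq.1)])
  refine mem_biUnion (x := g) (fun y z hz => ?_) (fun x y hy => ?_)
  · have := hg (y, h (z - zbar)) ⟨z, hz, le_rfl⟩ (ybar, 0) ⟨xbar, hybar.1, by simp⟩
    simp only [map_sub] at this ⊢
    linarith
  · have := hg (ybar, 0) ⟨zbar, hybar.2, by simp⟩ (y, f (x - xbar)) ⟨x, hy, le_rfl⟩
    simp only [map_sub] at this ⊢
    linarith

/-- coderivative chain rule for convex set-valued mappings under the
second core qualification condition. -/
theorem coderivative_chain_rule_qc2 {X Y Z : Type*} [AddCommGroup X] [Module ℝ X]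
    [AddCommGroup Y] [Module ℝ Y] [AddCommGroup Z] [Module ℝ Z]
    (F : X → Set Y) (G : Y → Set Z)
    (hconvF : Convex ℝ (svGraph F)) (hconvG : Convex ℝ (svGraph G))
    (hsolid : (algCore (svGraph G)).Nonempty)
    (hqc : ∃ (x : X) (y : Y), y ∈ F x ∧ y ∈ algCore (svDom G) ∧ (algCore (G y)).Nonempty)
    (xbar : X) (zbar : Z) (hxz : zbar ∈ svComp G F xbar)
    (ybar : Y) (hybar : ybar ∈ F xbar ∧ zbar ∈ G ybar) (h : Z →ₗ[ℝ] ℝ) :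
    coderiv (svComp G F) xbar zbar h =
      ⋃ g ∈ coderiv G ybar zbar h, coderiv F xbar ybar g :=
  coderivative_chain_rule_qc2_general F G hconvF hconvG hsolid hqc xbar zbar ybar hybar h
end

section
/- Let φ : X × Y → ℝ ∪ {+∞} be a convex function and F : X ⇒ Y a set-valued mapping with convex graph between real vector spaces, and let μ(x) := inf{φ(x, y) : y ∈ F(x)} be the associated marginal (optimal value) function. Assume μ(x) > −∞ for all x ∈ X, fix x̄ ∈ dom(μ), assume S(x̄) := {ȳ ∈ F(x̄) : μ(x̄) = φ(x̄, ȳ)} ≠ ∅, and assume the qualification condition dom(φ) ∩ core(gph(F)) ≠ ∅. Then for any ȳ ∈ S(x̄) one has ∂μ(x̄) = ∪{f + D*F(x̄, ȳ)(g) : (f, g) ∈ ∂φ(x̄, ȳ)}, where a pair (f, g) of linear functions on X and Y is identified with the linear function (x, y) ↦ f(x) + g(y) on X × Y. -/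
open Pointwise Set

/-!
If `h ∈ ∂μ(x̄)`, then `z̄ = (x̄, ȳ)` minimizes `φ z - h z.1` over `gph F`, i.e. with
`k = h ∘ fst` we have `φ z̄ + k (z - z̄) ≤ φ z` on `gph F`. The convex set
`{(z - w, a - φ z̄ - k (w - z̄)) : (z, a) ∈ epi φ, w ∈ gph F}` contains no point `(0, a)` with
`a < 0` by this minimality, and the qualification condition makes its projection absorbing.
The M. Riesz extension theorem, applied to the cone it generates, gives a linear `ℓ` lying below
it; evaluating at `w = z̄` shows `ℓ ∈ ∂φ(z̄)`, and at `(z, a) = (z̄, φ z̄)` that `k - ℓ` is normal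
to `gph F`. Splitting `ℓ = (f, g)` turns the latter into `h - f ∈ D*F(x̄, ȳ)(g)`.
-/

section ConvexAnalysis

variable {E : Type*} [AddCommGroup E] [Module ℝ E]

theorem ConvexFun.convex_epi {φ : E → EReal} (hφ : ConvexFun φ) : Convex ℝ (epi φ) := by
  rintro ⟨z₁, a₁⟩ (h₁ : φ z₁ ≤ a₁) ⟨z₂, a₂⟩ (h₂ : φ z₂ ≤ a₂) s t hs ht hst
  obtain rfl : t = 1 - s := by linarith
  calc φ (s • z₁ + (1 - s) • z₂) ≤ (s : EReal) * φ z₁ + ((1 - s : ℝ) : EReal) * φ z₂ :=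
        hφ z₁ z₂ s hs (by linarith)
    _ ≤ (s : EReal) * a₁ + ((1 - s : ℝ) : EReal) * a₂ :=
        add_le_add (mul_le_mul_of_nonneg_left h₁ (by exact_mod_cast hs))
          (mul_le_mul_of_nonneg_left h₂ (by exact_mod_cast ht))
    _ = ((s • (z₁, a₁) + (1 - s) • (z₂, a₂)).2 : ℝ) := by simp

theorem ConvexCone.exists_linearMap_le_snd (K : ConvexCone ℝ (E × ℝ)) (hK : K.Pointed)
    (hproj : ∀ u, ∃ a, (u, a) ∈ K) (hnonneg : ∀ a, ((0 : E), a) ∈ K → 0 ≤ a) :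
    ∃ ℓ : E →ₗ[ℝ] ℝ, ∀ p ∈ K, ℓ p.1 ≤ p.2 := by
  let f : E × ℝ →ₗ.[ℝ] ℝ :=
    ⟨LinearMap.range (LinearMap.inr ℝ E ℝ), (LinearMap.snd ℝ E ℝ).domRestrict _⟩
  obtain ⟨g, hgf, hg⟩ := riesz_extension (K.toPointedCone hK) f
    (by
      rintro ⟨_, a, rfl⟩ ha
      exact hnonneg a ha)
    (by
      rintro ⟨u, a⟩
      obtain ⟨b, hb⟩ := hproj u
      exact ⟨⟨(0, b - a), b - a, rfl⟩, by simpa using hb⟩)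
  have hg_snd : ∀ a, g (0, a) = a := fun a => hgf ⟨(0, a), a, rfl⟩
  refine ⟨-g ∘ₗ LinearMap.inl ℝ E ℝ, fun p hp => ?_⟩
  have hsplit : g p = g (p.1, 0) + p.2 := by
    rw [← hg_snd p.2, ← map_add]
    simp
  have := hg p hp
  simp only [LinearMap.neg_apply, LinearMap.comp_apply, LinearMap.inl_apply]
  linarith

theorem Convex.exists_linearMap_le_snd {D : Set (E × ℝ)} (hD : Convex ℝ D) (h0 : 0 ∈ D)
    (habs : ∀ u, ∃ c : ℝ, 0 < c ∧ ∃ a, (c • u, a) ∈ D)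
    (hnonneg : ∀ a, ((0 : E), a) ∈ D → 0 ≤ a) :
    ∃ ℓ : E →ₗ[ℝ] ℝ, ∀ p ∈ D, ℓ p.1 ≤ p.2 := by
  obtain ⟨ℓ, hℓ⟩ := (ConvexCone.hull ℝ D).exists_linearMap_le_snd (ConvexCone.subset_hull h0)
    (fun u => by
      obtain ⟨c, hc, a, ha⟩ := habs u
      refine ⟨c⁻¹ * a, ?_⟩
      convert (ConvexCone.hull ℝ D).smul_mem (inv_pos.2 hc) (ConvexCone.subset_hull ha) using 1
      simp [smul_smul, hc.ne'])
    (fun a ha => by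
      obtain ⟨r, hr, p, hp, hrp⟩ := (ConvexCone.mem_hull_of_convex hD).1 ha
      obtain ⟨hp₁, hp₂⟩ := Prod.ext_iff.1 hrp
      have hp₁ : p.1 = 0 := by simpa [hr.ne'] using hp₁
      have := hnonneg p.2 (by rwa [← hp₁])
      simp only [Prod.smul_snd, smul_eq_mul] at hp₂
      rw [← hp₂]
      positivity)
  exact ⟨ℓ, fun p hp => hℓ p (ConvexCone.subset_hull hp)⟩

variable {φ : E → EReal} {Ω : Set E} {zbar : E} {k : E →ₗ[ℝ] ℝ}

theorem exists_linearMap_separating_epi_of_le_on (hφ : ConvexFun φ)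
    (hΩ : Convex ℝ Ω) (hzbar : zbar ∈ Ω) {r : ℝ} (hr : φ zbar = r)
    (hqc : (fDom φ ∩ algCore Ω).Nonempty) (hk : ∀ z ∈ Ω, φ zbar + k (z - zbar) ≤ φ z) :
    ∃ ℓ : E →ₗ[ℝ] ℝ, ∀ p ∈ epi φ, ∀ w ∈ Ω, ℓ (p.1 - w) ≤ p.2 - r - k (w - zbar) := by
  let D : Set (E × ℝ) :=
    (fun q : (E × ℝ) × E => (q.1.1 - q.2, q.1.2 - r - k (q.2 - zbar))) '' (epi φ ×ˢ Ω)
  have hD : Convex ℝ D := by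
    rintro _ ⟨⟨p₁, w₁⟩, ⟨hp₁, hw₁⟩, rfl⟩ _ ⟨⟨p₂, w₂⟩, ⟨hp₂, hw₂⟩, rfl⟩ s t hs ht hst
    refine ⟨s • (p₁, w₁) + t • (p₂, w₂),
      ⟨hφ.convex_epi hp₁ hp₂ hs ht hst, hΩ hw₁ hw₂ hs ht hst⟩, ?_⟩
    obtain rfl : t = 1 - s := by linarith
    ext
    · simp only [Prod.fst_add, Prod.smul_fst, Prod.snd_add, Prod.smul_snd]
      module
    · simp only [Prod.fst_add, Prod.smul_fst, Prod.snd_add, Prod.smul_snd, smul_eq_mul, map_sub,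
        map_add, map_smul]
      ring
  have habs : ∀ u, ∃ c : ℝ, 0 < c ∧ ∃ a, (c • u, a) ∈ D := by
    intro u
    obtain ⟨zhat, hzhat, -, hcore⟩ := hqc
    obtain ⟨δ, hδ, hmem⟩ := hcore (-u)
    refine ⟨δ / 2, by positivity, _, ((zhat, (φ zhat).toReal), zhat + (δ / 2) • -u),
      ⟨EReal.le_coe_toReal hzhat.ne, hmem _ ?_⟩, Prod.ext ?_ rfl⟩
    · rw [abs_of_pos (by positivity)]
      linarith
    · simp
  have hnonneg : ∀ a, ((0 : E), a) ∈ D → 0 ≤ a := by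
    rintro a ⟨⟨⟨z, b⟩, w⟩, ⟨hzb, hw⟩, hq⟩
    obtain ⟨hzw, rfl⟩ := Prod.ext_iff.1 hq
    obtain rfl : z = w := sub_eq_zero.1 hzw
    have := (hk z hw).trans hzb
    rw [hr, ← EReal.coe_add, EReal.coe_le_coe_iff] at this
    dsimp only
    linarith
  obtain ⟨ℓ, hℓ⟩ := hD.exists_linearMap_le_snd ⟨((zbar, r), zbar), ⟨hr.le, hzbar⟩, by simp⟩
    habs hnonneg
  exact ⟨ℓ, fun p hp w hw => hℓ _ ⟨(p, w), ⟨hp, hw⟩, rfl⟩⟩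

theorem forall_le_on_iff_exists_mem_subdiff_sub_mem_normalCone (hbot : ∀ z, φ z ≠ ⊥)
    (hφ : ConvexFun φ) (hΩ : Convex ℝ Ω) (hzbar : zbar ∈ Ω) (htop : φ zbar ≠ ⊤)
    (hqc : (fDom φ ∩ algCore Ω).Nonempty) :
    (∀ z ∈ Ω, φ zbar + k (z - zbar) ≤ φ z) ↔
      ∃ ℓ ∈ subdiff φ zbar, k - ℓ ∈ normalCone zbar Ω := by
  set r := (φ zbar).toReal
  have hr : φ zbar = r := (EReal.coe_toReal htop (hbot zbar)).symm
  constructor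
  · intro hk
    obtain ⟨ℓ, hℓ⟩ := exists_linearMap_separating_epi_of_le_on hφ hΩ hzbar hr hqc hk
    refine ⟨ℓ, fun z => ?_, fun w hw => ?_⟩
    · rcases eq_or_ne (φ z) ⊤ with hz | hz
      · simp [hz]
      have := hℓ (z, (φ z).toReal) (EReal.le_coe_toReal hz) zbar hzbar
      rw [hr, ← EReal.coe_toReal hz (hbot z), ← EReal.coe_add, EReal.coe_le_coe_iff]
      simp only [sub_self, map_zero, sub_zero] at this
      linarith
    · have := hℓ (zbar, r) hr.le w hw
      simp only [map_sub, LinearMap.sub_apply] at this ⊢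
      linarith
  · rintro ⟨ℓ, hℓ, hN⟩ z hz
    calc φ zbar + k (z - zbar) ≤ φ zbar + ℓ (z - zbar) := by
          rw [hr, ← EReal.coe_add, ← EReal.coe_add, EReal.coe_le_coe_iff]
          have := hN z hz
          rw [LinearMap.sub_apply] at this
          linarith
      _ ≤ φ z := hℓ z

end ConvexAnalysis

section MarginalFunction

variable {X Y : Type*} [AddCommGroup X] [Module ℝ X] [AddCommGroup Y] [Module ℝ Y]

theorem pairFun_comp_inl_comp_inr (ℓ : X × Y →ₗ[ℝ] ℝ) :
    pairFun (ℓ ∘ₗ LinearMap.inl ℝ X Y) (ℓ ∘ₗ LinearMap.inr ℝ X Y) = ℓ :=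
  LinearMap.coprod_comp_inl_inr ℓ

theorem comp_fst_sub_pairFun (h f : X →ₗ[ℝ] ℝ) (g : Y →ₗ[ℝ] ℝ) :
    h ∘ₗ LinearMap.fst ℝ X Y - pairFun f g = pairFun (h - f) (-g) := by
  ext <;> simp [pairFun]

theorem mem_coderiv_iff_pairFun_mem_normalCone {F : X → Set Y} {xbar : X} {ybar : Y}
    {f : X →ₗ[ℝ] ℝ} {g : Y →ₗ[ℝ] ℝ} :
    f ∈ coderiv F xbar ybar g ↔ pairFun f (-g) ∈ normalCone (xbar, ybar) (svGraph F) := by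
  simp only [coderiv, normalCone, svGraph, Set.mem_ofPred_eq, Prod.forall]
  refine forall₂_congr fun x y => imp_congr_right fun _ => ?_
  have : pairFun f (-g) ((x, y) - (xbar, ybar)) = f (x - xbar) - g (y - ybar) := by
    simp [pairFun, sub_eq_add_neg]
  rw [this]

theorem mem_subdiff_marginal_iff {φ : X × Y → EReal} {F : X → Set Y} {μ : X → EReal}
    (hμ : ∀ x, μ x = ⨅ y ∈ F x, φ (x, y)) {xbar : X} {ybar : Y}
    (hμbar : μ xbar = φ (xbar, ybar)) {h : X →ₗ[ℝ] ℝ} :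
    h ∈ subdiff μ xbar ↔ ∀ z ∈ svGraph F,
      φ (xbar, ybar) + (h ∘ₗ LinearMap.fst ℝ X Y) (z - (xbar, ybar)) ≤ φ z := by
  simp [subdiff, svGraph, ← hμbar, hμ]

end MarginalFunction

theorem marginal_function_subdifferential_qc2_general {X Y : Type*} [AddCommGroup X] [Module ℝ X]
    [AddCommGroup Y] [Module ℝ Y] (φ : X × Y → EReal) (F : X → Set Y)
    (hbot : ∀ p, φ p ≠ ⊥) (hconv : ConvexFun φ) (hconvF : Convex ℝ (svGraph F))
    (μ : X → EReal) (hμ : ∀ x : X, μ x = ⨅ y ∈ F x, φ (x, y))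
    (xbar : X) (hxbar : xbar ∈ fDom μ)
    (hqc : (fDom φ ∩ algCore (svGraph F)).Nonempty)
    (ybar : Y) (hybar : ybar ∈ F xbar ∧ μ xbar = φ (xbar, ybar)) :
    subdiff μ xbar =
      {h : X →ₗ[ℝ] ℝ | ∃ (f : X →ₗ[ℝ] ℝ) (g : Y →ₗ[ℝ] ℝ),
        pairFun f g ∈ subdiff φ (xbar, ybar) ∧
        ∃ f' ∈ coderiv F xbar ybar g, h = f + f'} := by
  obtain ⟨hyF, hμφ⟩ := hybar
  ext h
  rw [mem_subdiff_marginal_iff hμ hμφ, forall_le_on_iff_exists_mem_subdiff_sub_mem_normalCone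
    hbot hconv hconvF hyF (hμφ ▸ hxbar.ne) hqc, Set.mem_ofPred_eq]
  constructor
  · rintro ⟨ℓ, hℓ, hN⟩
    refine ⟨ℓ ∘ₗ LinearMap.inl ℝ X Y, ℓ ∘ₗ LinearMap.inr ℝ X Y,
      by rwa [pairFun_comp_inl_comp_inr], h - ℓ ∘ₗ LinearMap.inl ℝ X Y, ?_, by abel⟩
    rwa [mem_coderiv_iff_pairFun_mem_normalCone, ← comp_fst_sub_pairFun,
      pairFun_comp_inl_comp_inr]
  · rintro ⟨f, g, hfg, f', hf', rfl⟩
    refine ⟨pairFun f g, hfg, ?_⟩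
    rwa [comp_fst_sub_pairFun, add_sub_cancel_left, ← mem_coderiv_iff_pairFun_mem_normalCone]

/-- subdifferential of the convex marginal (optimal value) function under
the second qualification condition. -/
theorem marginal_function_subdifferential_qc2 {X Y : Type*} [AddCommGroup X] [Module ℝ X]
    [AddCommGroup Y] [Module ℝ Y] (φ : X × Y → EReal) (F : X → Set Y)
    (hbot : ∀ p, φ p ≠ ⊥) (hconv : ConvexFun φ) (hconvF : Convex ℝ (svGraph F))
    (μ : X → EReal) (hμ : ∀ x : X, μ x = ⨅ y ∈ F x, φ (x, y))
    (hfin : ∀ x : X, μ x ≠ ⊥) (xbar : X) (hxbar : xbar ∈ fDom μ)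
    (hqc : (fDom φ ∩ algCore (svGraph F)).Nonempty)
    (ybar : Y) (hybar : ybar ∈ F xbar ∧ μ xbar = φ (xbar, ybar)) :
    subdiff μ xbar =
      {h : X →ₗ[ℝ] ℝ | ∃ (f : X →ₗ[ℝ] ℝ) (g : Y →ₗ[ℝ] ℝ),
        pairFun f g ∈ subdiff φ (xbar, ybar) ∧
        ∃ f' ∈ coderiv F xbar ybar g, h = f + f'} :=
  marginal_function_subdifferential_qc2_general φ F hbot hconv hconvF μ hμ xbar hxbar hqc ybar hybar
end
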